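/- Let (a_n) be a real sequence. Suppose there exist c ≠ 0 and 0 < θ < μ < 1 with a_n = c·μ^n + O(θ^n), and suppose also that there exist β ∈ ℝ and ν ∈ (0,1) with a_n = β·n·ν^n + O(ν^n). Then β = 0. -/

import Mathlib

open Filter

/-- A sequence cannot have both a pure exponential asymptotic `c·μ^n + O(θ^n)` (with `c ≠ 0`,
`θ < μ`) and an asymptotic `β·n·ν^n + O(ν^n)` unless `β = 0`. -/
theorem stmt2 (a : ℕ → ℝ) (c θ μ β ν : ℝ) (hc : c ≠ 0)
    (hθ : 0 < θ) (hθμ : θ < μ) (hμ : μ < 1)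
    (h1 : ∃ C > 0, ∃ N : ℕ, ∀ n ≥ N, |a n - c * μ ^ n| ≤ C * θ ^ n)
    (hν : ν ∈ Set.Ioo (0 : ℝ) 1)
    (h2 : ∃ C > 0, ∃ N : ℕ, ∀ n ≥ N, |a n - β * n * ν ^ n| ≤ C * ν ^ n) :
    β = 0 := by
  obtain ⟨C1, hC1, N1, hA⟩ := h1
  obtain ⟨C2, hC2, N2, hB⟩ := h2
  obtain ⟨hν0, hν1⟩ := hν
  have hμ0 : (0:ℝ) < μ := hθ.trans hθμ
  -- key inequality valid for n ≥ max N1 N2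
  have key : ∀ n ≥ max N1 N2,
      |β| * n * ν ^ n ≤ |c| * μ ^ n + C1 * θ ^ n + C2 * ν ^ n ∧
      |c| * μ ^ n ≤ |β| * n * ν ^ n + C1 * θ ^ n + C2 * ν ^ n := by
    intro n hn
    have h1' := hA n (le_trans (le_max_left _ _) hn)
    have h2' := hB n (le_trans (le_max_right _ _) hn)
    constructor
    · have : |β * n * ν ^ n| ≤ |a n - c * μ ^ n| + |a n - β * n * ν ^ n| + |c * μ ^ n| := by
        have := abs_sub_abs_le_abs_sub (β * n * ν ^ n) (a n)
        calc |β * n * ν ^ n| = |(β * n * ν ^ n - a n) + (a n - c * μ ^ n) + c * μ ^ n| := by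
              ring_nf
          _ ≤ |β * n * ν ^ n - a n| + |a n - c * μ ^ n| + |c * μ ^ n| := by
              exact (abs_add_le _ _).trans (by gcongr; exact abs_add_le _ _)
          _ = |a n - c * μ ^ n| + |a n - β * n * ν ^ n| + |c * μ ^ n| := by
              rw [abs_sub_comm]; ring
      have e1 : |β * n * ν ^ n| = |β| * n * ν ^ n := by
        rw [abs_mul, abs_mul, abs_of_nonneg (by positivity : (0:ℝ) ≤ (n:ℝ)),
          abs_of_nonneg (by positivity : (0:ℝ) ≤ ν ^ n)]
      have e2 : |c * μ ^ n| = |c| * μ ^ n := by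
        rw [abs_mul, abs_of_nonneg (by positivity : (0:ℝ) ≤ μ ^ n)]
      rw [e1, e2] at this
      linarith
    · have : |c * μ ^ n| ≤ |a n - c * μ ^ n| + |a n - β * n * ν ^ n| + |β * n * ν ^ n| := by
        calc |c * μ ^ n| = |(c * μ ^ n - a n) + (a n - β * n * ν ^ n) + β * n * ν ^ n| := by
              ring_nf
          _ ≤ |c * μ ^ n - a n| + |a n - β * n * ν ^ n| + |β * n * ν ^ n| := by
              exact (abs_add_le _ _).trans (by gcongr; exact abs_add_le _ _)
          _ = |a n - c * μ ^ n| + |a n - β * n * ν ^ n| + |β * n * ν ^ n| := by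
              rw [abs_sub_comm]
      have e1 : |β * n * ν ^ n| = |β| * n * ν ^ n := by
        rw [abs_mul, abs_mul, abs_of_nonneg (by positivity : (0:ℝ) ≤ (n:ℝ)),
          abs_of_nonneg (by positivity : (0:ℝ) ≤ ν ^ n)]
      have e2 : |c * μ ^ n| = |c| * μ ^ n := by
        rw [abs_mul, abs_of_nonneg (by positivity : (0:ℝ) ≤ μ ^ n)]
      rw [e1, e2] at this
      linarith
  by_contra hβ
  have hβ' : 0 < |β| := abs_pos.mpr hβ
  rcases le_or_gt μ ν with hcase | hcase
  · -- μ ≤ ν : β·n bounded, contradiction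
    have bound : ∀ n ≥ max N1 N2, |β| * n ≤ |c| + C1 + C2 := by
      intro n hn
      have h := (key n hn).1
      have hμν : μ ^ n ≤ ν ^ n := pow_le_pow_left₀ hμ0.le hcase n
      have hθν : θ ^ n ≤ ν ^ n := pow_le_pow_left₀ hθ.le (hθμ.le.trans hcase) n
      have hνn : (0:ℝ) < ν ^ n := by positivity
      have : |β| * n * ν ^ n ≤ (|c| + C1 + C2) * ν ^ n := by nlinarith [abs_nonneg c]
      have := (mul_le_mul_iff_of_pos_right hνn).mp this
      linarith
    obtain ⟨n, hn1, hn2⟩ : ∃ n : ℕ, n ≥ max N1 N2 ∧ (|c| + C1 + C2) / |β| < n := by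
      obtain ⟨m, hm⟩ := exists_nat_gt ((|c| + C1 + C2) / |β|)
      refine ⟨max (max N1 N2) m, le_max_left _ _, lt_of_lt_of_le hm ?_⟩
      exact_mod_cast Nat.cast_le.mpr (le_max_right _ _)
    have := bound n hn1
    have : (|c| + C1 + C2) / |β| < (|c| + C1 + C2) / |β| := by
      calc (|c| + C1 + C2) / |β| < n := hn2
        _ ≤ (|c| + C1 + C2) / |β| := by
            rw [le_div_iff₀ hβ']; linarith [this]
    exact lt_irrefl _ this
  · -- ν < μ : divide second inequality by μ^n, RHS → 0, contradicting |c| > 0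
    have hc' : 0 < |c| := abs_pos.mpr hc
    set f : ℕ → ℝ := fun n => |β| * (n * (ν / μ) ^ n) + C1 * (θ / μ) ^ n + C2 * (ν / μ) ^ n
      with hf
    have hle : ∀ᶠ n in atTop, |c| ≤ f n := by
      filter_upwards [eventually_ge_atTop (max N1 N2)] with n hn
      have h := (key n hn).2
      have hμn : (0:ℝ) < μ ^ n := by positivity
      have hdiv : |c| ≤ (|β| * n * ν ^ n + C1 * θ ^ n + C2 * ν ^ n) / μ ^ n := by
        rw [le_div_iff₀ hμn]; linarith
      calc |c| ≤ (|β| * n * ν ^ n + C1 * θ ^ n + C2 * ν ^ n) / μ ^ n := hdiv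
        _ = f n := by
            rw [hf]; simp only [div_pow]; field_simp
    have htend : Tendsto f atTop (nhds 0) := by
      have t1 : Tendsto (fun n : ℕ => (n : ℝ) * (ν / μ) ^ n) atTop (nhds 0) :=
        tendsto_self_mul_const_pow_of_lt_one (by positivity) ((div_lt_one hμ0).mpr hcase)
      have t2 : Tendsto (fun n : ℕ => (θ / μ) ^ n) atTop (nhds 0) :=
        tendsto_pow_atTop_nhds_zero_of_lt_one (by positivity) ((div_lt_one hμ0).mpr hθμ)
      have t3 : Tendsto (fun n : ℕ => (ν / μ) ^ n) atTop (nhds 0) :=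
        tendsto_pow_atTop_nhds_zero_of_lt_one (by positivity) ((div_lt_one hμ0).mpr hcase)
      have := ((t1.const_mul |β|).add (t2.const_mul C1)).add (t3.const_mul C2)
      simpa using this
    have : |c| ≤ 0 := ge_of_tendsto htend hle
    linarith
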